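/- The Y-to-V reduction for inexact flows is correct: let v be a node of in-degree 1 with in-edge (u,v) having interval [L_in, R_in] and out-edges (v,w_1),...,(v,w_ℓ), and suppose the inexact flow conservation L_in ≤ Σ_i L(v,w_i) and Σ_i R(v,w_i) ≤ R_in holds. Form G' by contracting as in Y-to-V, giving edge (u,w_i) the interval [L(v,w_i), R(v,w_i)]. Then inexact flow decompositions of G of size k correspond exactly to inexact flow decompositions of G' of size k. -/

import Mathlib

/-- An inexact flow network on a DAG with unique source `s` and unique sink `t`:
each edge `e` carries an interval `[L e, R e]` with `0 < L e ≤ R e`. -/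
structure InexactNet (V : Type) [Fintype V] [DecidableEq V] where
  E : V → V → Bool
  s : V
  t : V
  L : V → V → ℕ
  R : V → V → ℕ
  topo : V → ℕ
  topo_lt : ∀ u v : V, E u v → topo u < topo v
  L_pos : ∀ u v : V, E u v → 0 < L u v
  LR : ∀ u v : V, E u v → L u v ≤ R u v
  s_no_in : ∀ u : V, ¬ E u s
  t_no_out : ∀ w : V, ¬ E t w
  source_unique : ∀ v : V, v ≠ s → ∃ u : V, E u v
  sink_unique : ∀ v : V, v ≠ t → ∃ w : V, E v w

variable {V : Type} [Fintype V] [DecidableEq V]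

/-- A (nonempty) directed path of the inexact network, as its list of edges. -/
def IsPathI (N : InexactNet V) (p : List (V × V)) : Prop :=
  p ≠ [] ∧ (∀ e ∈ p, N.E e.1 e.2) ∧ List.Chain' (fun e e' : V × V => e.2 = e'.1) p

/-- An `s`-`t` path of the inexact network. -/
def IsSTPathI (N : InexactNet V) (p : List (V × V)) : Prop :=
  IsPathI N p ∧ (p.map Prod.fst).head? = some N.s ∧ (p.map Prod.snd).getLast? = some N.t

/-- An inexact flow decomposition: weighted `s`-`t` paths whose superposition
lies within `[L e, R e]` on every edge `e`. -/
def IsIFD (N : InexactNet V) (D : List (List (V × V) × ℕ)) : Prop :=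
  (∀ pw ∈ D, IsSTPathI N pw.1 ∧ 0 < pw.2) ∧
  ∀ u v : V, N.E u v →
    N.L u v ≤ (D.map (fun pw => if (u, v) ∈ pw.1 then pw.2 else 0)).sum ∧
    (D.map (fun pw => if (u, v) ∈ pw.1 then pw.2 else 0)).sum ≤ N.R u v

/-- A path is safe for inexact decompositions if every inexact flow
decomposition contains a path having it as a subpath. -/
def SafeI (N : InexactNet V) (P : List (V × V)) : Prop :=
  ∀ D, IsIFD N D → ∃ pw ∈ D, P <:+: pw.1

set_option linter.unusedSectionVars false

def cEdge (u v : V) (hu : u ≠ v) (e : V × V) :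
    Option ({x : V // x ≠ v} × {x : V // x ≠ v}) :=
  if hb : e.2 = v then none
  else if ha : e.1 = v then some (⟨u, hu⟩, ⟨e.2, hb⟩)
  else some (⟨e.1, ha⟩, ⟨e.2, hb⟩)

def xEdge (N : InexactNet V) (u v : V) (e : {x : V // x ≠ v} × {x : V // x ≠ v}) :
    List (V × V) :=
  if e.1.1 = u ∧ N.E v e.2.1 then [(u, v), (v, e.2.1)] else [(e.1.1, e.2.1)]

lemma mem_contract {u v : V} (hu : u ≠ v) (p : List (V × V))
    (a b : {x : V // x ≠ v}) :
    (a, b) ∈ p.filterMap (cEdge u v hu) ↔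
      ((a.1, b.1) ∈ p ∨ (a.1 = u ∧ (v, b.1) ∈ p)) := by
  simp only [List.mem_filterMap]
  constructor
  · rintro ⟨⟨x, y⟩, hxy, he⟩
    unfold cEdge at he
    dsimp only at he
    split at he
    · exact absurd he (by simp)
    · rename_i hy
      split at he
      · rename_i hx
        obtain ⟨h1, h2⟩ := Prod.mk.inj (Option.some.inj he)
        right
        refine ⟨by rw [← h1], ?_⟩
        have : y = b.1 := by rw [← h2]
        rw [← this, ← hx]
        exact hxy
      · rename_i hx
        obtain ⟨h1, h2⟩ := Prod.mk.inj (Option.some.inj he)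
        left
        have hx' : x = a.1 := by rw [← h1]
        have hy' : y = b.1 := by rw [← h2]
        rw [← hx', ← hy']
        exact hxy
  · rintro (h | ⟨hau, h⟩)
    · exact ⟨(a.1, b.1), h, by simp [cEdge, b.2, a.2]⟩
    · refine ⟨(v, b.1), h, ?_⟩
      simp only [cEdge]
      rw [dif_neg b.2]
      rw [dif_pos trivial]
      congr 1
      exact Prod.ext (Subtype.ext hau.symm) rfl

lemma mem_expand (N : InexactNet V) (u v : V) (p : List ({x : V // x ≠ v} × {x : V // x ≠ v}))
    (x y : V) :
    (x, y) ∈ p.flatMap (xEdge N u v) ↔ ∃ e ∈ p, (x, y) ∈ xEdge N u v e :=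
  List.mem_flatMap

lemma chain_pairwise {W : Type*} (T : W → ℕ) (p : List (W × W))
    (hE : ∀ e ∈ p, T e.1 < T e.2)
    (hc : List.Chain' (fun e e' : W × W => e.2 = e'.1) p) :
    List.Pairwise (fun e e' : W × W => T e.2 ≤ T e'.1) p := by
  induction p with
  | nil => exact .nil
  | cons e l ih =>
    rw [List.pairwise_cons]
    have hl : List.Chain' (fun e e' : W × W => e.2 = e'.1) l := hc.tail
    have hpl := ih (fun x hx => hE x (List.mem_cons_of_mem _ hx)) hl
    refine ⟨?_, hpl⟩
    intro e' he'
    cases l with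
    | nil => cases he'
    | cons f l' =>
      have hef : e.2 = f.1 := (List.isChain_cons_cons.mp hc).1
      rcases List.mem_cons.mp he' with rfl | he''
      · exact le_of_eq (congrArg T hef)
      · have h1 : T f.2 ≤ T e'.1 := (List.pairwise_cons.mp hpl).1 e' he''
        have h2 : T f.1 < T f.2 := hE f (by simp)
        calc T e.2 = T f.1 := congrArg T hef
          _ ≤ T e'.1 := le_of_lt (lt_of_lt_of_le h2 h1)

lemma path_fst_ne {W : Type*} (T : W → ℕ) (p : List (W × W))
    (hE : ∀ e ∈ p, T e.1 < T e.2)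
    (hc : List.Chain' (fun e e' : W × W => e.2 = e'.1) p) :
    ∀ e ∈ p, ∀ e' ∈ p, e ≠ e' → e.1 ≠ e'.1 := by
  have hp : List.Pairwise (fun e e' : W × W => e.1 ≠ e'.1) p := by
    refine (chain_pairwise T p hE hc).imp_of_mem ?_
    intro a b ha hb h heq
    have h1 : T a.1 < T a.2 := hE a ha
    rw [heq] at h1
    exact absurd (lt_of_lt_of_le h1 h) (lt_irrefl _)
  haveI : Std.Symm (fun e e' : W × W => e.1 ≠ e'.1) := ⟨fun a b h => h.symm⟩
  exact fun e he e' he' hne => List.Pairwise.forall hp he he' hne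

lemma list_sum_finset_sum {α β : Type*} (l : List α) (s : Finset β) (f : β → α → ℕ) :
    (l.map (fun a => ∑ b ∈ s, f b a)).sum = ∑ b ∈ s, (l.map (f b)).sum := by
  induction l with
  | nil => simp
  | cons a l ih => simp [ih, Finset.sum_add_distrib]

lemma contract_struct (N : InexactNet V) (u v : V) (hu : u ≠ v) (hvt : v ≠ N.t)
    (hin : ∀ a : V, N.E a v → a = u) :
    ∀ p : List (V × V), (∀ e ∈ p, N.E e.1 e.2) →
      List.Chain' (fun e e' : V × V => e.2 = e'.1) p →
      (p.map Prod.snd).getLast? = some N.t →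
      (∀ x ∈ (p.map Prod.fst).head?, x ≠ v) →
      List.Chain' (fun e e' : {x : V // x ≠ v} × {x : V // x ≠ v} => e.2 = e'.1)
        (p.filterMap (cEdge u v hu)) ∧
      ((p.filterMap (cEdge u v hu)).map (fun e => e.1.1)).head? = (p.map Prod.fst).head? ∧
      ((p.filterMap (cEdge u v hu)).map (fun e => e.2.1)).getLast? = (p.map Prod.snd).getLast? := by
  suffices H : ∀ n (p : List (V × V)), p.length ≤ n → (∀ e ∈ p, N.E e.1 e.2) →
      List.Chain' (fun e e' : V × V => e.2 = e'.1) p →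
      (p.map Prod.snd).getLast? = some N.t →
      (∀ x ∈ (p.map Prod.fst).head?, x ≠ v) →
      List.Chain' (fun e e' : {x : V // x ≠ v} × {x : V // x ≠ v} => e.2 = e'.1)
        (p.filterMap (cEdge u v hu)) ∧
      ((p.filterMap (cEdge u v hu)).map (fun e => e.1.1)).head? = (p.map Prod.fst).head? ∧
      ((p.filterMap (cEdge u v hu)).map (fun e => e.2.1)).getLast? = (p.map Prod.snd).getLast? by
    exact fun p => H p.length p le_rfl
  intro n
  induction n with
  | zero =>
    intro p hlen he hc hl hh
    have hp : p = [] := List.length_eq_zero_iff.mp (le_antisymm hlen (Nat.zero_le _))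
    subst hp
    simp at hl
  | succ n ih =>
    intro p hlen he hc hl hh
    cases p with
    | nil => simp at hl
    | cons ab rest =>
      obtain ⟨a, b⟩ := ab
      have ha : a ≠ v := hh a (by simp)
      by_cases hb : b = v
      · subst hb
        have hau : a = u := hin a (he (a, b) (by simp))
        cases rest with
        | nil =>
          simp only [List.map_cons, List.map_nil, List.getLast?_singleton] at hl
          exact absurd (Option.some.inj hl) hvt
        | cons f rest' =>
          have hf1 : b = f.1 := (List.isChain_cons_cons.mp hc).1
          have hef : N.E f.1 f.2 := he f (by simp)
          have hf2 : f.2 ≠ b := by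
            have h1 := N.topo_lt f.1 f.2 hef
            rw [← hf1] at h1
            exact fun h => absurd (h ▸ h1) (lt_irrefl _)
          have hcontract : ((a, b) :: f :: rest').filterMap (cEdge u b hu)
              = (⟨u, hu⟩, ⟨f.2, hf2⟩) :: rest'.filterMap (cEdge u b hu) := by
            rw [List.filterMap_cons, List.filterMap_cons]
            have h1 : cEdge u b hu (a, b) = none := by simp [cEdge]
            have h2 : cEdge u b hu f = some (⟨u, hu⟩, ⟨f.2, hf2⟩) := by
              simp [cEdge, hf2, ← hf1]
            rw [h1, h2]
          rw [hcontract]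
          cases rest' with
          | nil =>
            refine ⟨List.isChain_singleton _, by simp [hau], by simp⟩
          | cons g rest'' =>
            have hch' : List.Chain' (fun e e' : V × V => e.2 = e'.1) (f :: g :: rest'') :=
              (List.isChain_cons_cons.mp hc).2
            have hgf : f.2 = g.1 := (List.isChain_cons_cons.mp hch').1
            have hg1 : g.1 ≠ b := by rw [← hgf]; exact hf2
            obtain ⟨C, Hh, Hl⟩ := ih (g :: rest'')
              (by simp at hlen ⊢; omega)
              (fun e heq => he e (List.mem_cons_of_mem _ (List.mem_cons_of_mem _ heq)))
              hch'.tail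
              (by simpa using hl)
              (by simpa using hg1)
            have hne : (g :: rest'').filterMap (cEdge u b hu) ≠ [] := by
              intro h0
              rw [h0] at Hl
              have h1 : (List.map Prod.snd (g :: rest'')).getLast?.isSome :=
                List.getLast?_isSome.mpr (by simp)
              rw [← Hl] at h1
              simp at h1
            cases h0 : (g :: rest'').filterMap (cEdge u b hu) with
            | nil => exact absurd h0 hne
            | cons z zs =>
              rw [h0] at C Hh Hl
              simp only [List.map_cons, List.head?_cons, Option.some.injEq] at Hh
              refine ⟨?_, by simp [hau], ?_⟩
              · rw [List.Chain', List.isChain_cons_cons]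
                refine ⟨?_, C⟩
                exact Subtype.ext (by show f.2 = z.1.1; rw [hgf]; exact Hh.symm)
              · simp only [List.map_cons, List.getLast?_cons_cons] at Hl ⊢
                exact Hl
      · have hcontract : ((a, b) :: rest).filterMap (cEdge u v hu)
            = (⟨a, ha⟩, ⟨b, hb⟩) :: rest.filterMap (cEdge u v hu) := by
          rw [List.filterMap_cons]
          have h1 : cEdge u v hu (a, b) = some (⟨a, ha⟩, ⟨b, hb⟩) := by
            simp [cEdge, hb, ha]
          rw [h1]
        rw [hcontract]
        cases rest with
        | nil => exact ⟨List.isChain_singleton _, by simp, by simp⟩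
        | cons f rest' =>
          have hbf : b = f.1 := (List.isChain_cons_cons.mp hc).1
          have hf1 : f.1 ≠ v := by rw [← hbf]; exact hb
          obtain ⟨C, Hh, Hl⟩ := ih (f :: rest')
            (by simp at hlen ⊢; omega)
            (fun e heq => he e (List.mem_cons_of_mem _ heq))
            hc.tail
            (by simpa using hl)
            (by simpa using hf1)
          have hne : (f :: rest').filterMap (cEdge u v hu) ≠ [] := by
            intro h0
            rw [h0] at Hl
            have h1 : (List.map Prod.snd (f :: rest')).getLast?.isSome :=
              List.getLast?_isSome.mpr (by simp)
            rw [← Hl] at h1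
            simp at h1
          cases h0 : (f :: rest').filterMap (cEdge u v hu) with
          | nil => exact absurd h0 hne
          | cons z zs =>
            rw [h0] at C Hh Hl
            simp only [List.map_cons, List.head?_cons, Option.some.injEq] at Hh
            refine ⟨?_, by simp, ?_⟩
            · rw [List.Chain', List.isChain_cons_cons]
              refine ⟨?_, C⟩
              exact Subtype.ext (by show b = z.1.1; rw [hbf]; exact Hh.symm)
            · simp only [List.map_cons, List.getLast?_cons_cons] at Hl ⊢
              exact Hl

lemma xEdge_ne_nil (N : InexactNet V) (u v : V) (e : {x : V // x ≠ v} × {x : V // x ≠ v}) :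
    xEdge N u v e ≠ [] := by
  unfold xEdge; split <;> simp

lemma xEdge_head (N : InexactNet V) (u v : V) (e : {x : V // x ≠ v} × {x : V // x ≠ v}) :
    ((xEdge N u v e).map Prod.fst).head? = some e.1.1 := by
  unfold xEdge; split
  · rename_i h; simp [h.1]
  · simp

lemma xEdge_last (N : InexactNet V) (u v : V) (e : {x : V // x ≠ v} × {x : V // x ≠ v}) :
    ((xEdge N u v e).map Prod.snd).getLast? = some e.2.1 := by
  unfold xEdge; split <;> simp

lemma xEdge_chain (N : InexactNet V) (u v : V) (e : {x : V // x ≠ v} × {x : V // x ≠ v}) :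
    List.Chain' (fun e e' : V × V => e.2 = e'.1) (xEdge N u v e) := by
  unfold xEdge; split
  · exact List.isChain_cons_cons.mpr ⟨rfl, List.isChain_singleton _⟩
  · exact List.isChain_singleton _

lemma flatMap_ne_nil (N : InexactNet V) (u v : V)
    (p : List ({x : V // x ≠ v} × {x : V // x ≠ v})) (hp : p ≠ []) :
    p.flatMap (xEdge N u v) ≠ [] := by
  cases p with
  | nil => exact absurd rfl hp
  | cons e rest =>
    rw [List.flatMap_cons]
    intro h
    exact xEdge_ne_nil N u v e (List.append_eq_nil_iff.mp h).1

lemma expand_struct (N : InexactNet V) (u v : V) :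
    ∀ p : List ({x : V // x ≠ v} × {x : V // x ≠ v}),
      List.Chain' (fun e e' : {x : V // x ≠ v} × {x : V // x ≠ v} => e.2 = e'.1) p →
      List.Chain' (fun e e' : V × V => e.2 = e'.1) (p.flatMap (xEdge N u v)) ∧
      ((p.flatMap (xEdge N u v)).map Prod.fst).head? = (p.map (fun e => e.1.1)).head? ∧
      ((p.flatMap (xEdge N u v)).map Prod.snd).getLast? = (p.map (fun e => e.2.1)).getLast? := by
  intro p
  induction p with
  | nil => intro _; simp; exact List.isChain_nil
  | cons e rest ih =>
    intro hc
    obtain ⟨C, Hh, Hl⟩ := ih hc.tail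
    rw [List.flatMap_cons]
    cases rest with
    | nil =>
      simp only [List.flatMap_nil, List.append_nil] at *
      exact ⟨xEdge_chain N u v e, by rw [xEdge_head]; simp, by rw [xEdge_last]; simp⟩
    | cons f rest' =>
      have hef : e.2 = f.1 := (List.isChain_cons_cons.mp hc).1
      have hfne : (f :: rest').flatMap (xEdge N u v) ≠ [] := flatMap_ne_nil N u v _ (by simp)
      refine ⟨?_, ?_, ?_⟩
      · refine List.IsChain.append (xEdge_chain N u v e) C ?_
        intro x hx y hy
        have hx2 : x.2 = e.2.1 := by
          have h := xEdge_last N u v e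
          rw [List.getLast?_map] at h
          rw [Option.mem_def] at hx
          rw [hx] at h
          simpa using h
        cases h0 : xEdge N u v f with
        | nil => exact absurd h0 (xEdge_ne_nil N u v f)
        | cons z zs =>
          have hy1 : y = z := by
            rw [List.flatMap_cons, h0, List.head?_append] at hy
            exact (by simpa using hy : z = y).symm
          have hz : z.1 = f.1.1 := by
            have h := xEdge_head N u v f
            rw [h0] at h
            simpa using h
          rw [hx2, hy1, hz, hef]
      · rw [List.map_append, List.head?_append]
        cases h0 : xEdge N u v e with
        | nil => exact absurd h0 (xEdge_ne_nil N u v e)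
        | cons z zs =>
          have h := xEdge_head N u v e
          rw [h0] at h
          simp only [List.map_cons, List.head?_cons, Option.some.injEq] at h
          simp [h]
      · rw [List.map_append]
        rw [List.getLast?_append_of_ne_nil _ (by
          simpa using flatMap_ne_nil N u v (f :: rest') (by simp))]
        rw [Hl]
        simp only [List.map_cons, List.getLast?_cons_cons]

lemma mem_expand_plain (N : InexactNet V) (u v : V) (x y : V) (hx : x ≠ v) (hy : y ≠ v)
    (hxy : ¬(x = u ∧ N.E v y)) (p : List ({a : V // a ≠ v} × {a : V // a ≠ v})) :
    (x, y) ∈ p.flatMap (xEdge N u v) ↔ (⟨x, hx⟩, ⟨y, hy⟩) ∈ p := by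
  rw [List.mem_flatMap]
  constructor
  · rintro ⟨e, hep, hm⟩
    unfold xEdge at hm
    split at hm
    · simp only [List.mem_cons, List.mem_singleton, List.not_mem_nil] at hm
      rcases hm with hm | hm | hm
      · exact absurd (Prod.mk.inj hm).2 hy
      · exact absurd (Prod.mk.inj hm).1 hx
      · cases hm
    · simp only [List.mem_singleton] at hm
      obtain ⟨h1, h2⟩ := Prod.mk.inj hm
      have : e = (⟨x, hx⟩, ⟨y, hy⟩) :=
        Prod.ext (Subtype.ext h1.symm) (Subtype.ext h2.symm)
      rw [← this]; exact hep
  · intro h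
    refine ⟨(⟨x, hx⟩, ⟨y, hy⟩), h, ?_⟩
    unfold xEdge
    rw [if_neg (by simpa using hxy)]
    simp

lemma mem_expand_contracted (N : InexactNet V) (u v : V) (hu : u ≠ v) (y : V) (hy : y ≠ v)
    (hEvy : N.E v y) (p : List ({a : V // a ≠ v} × {a : V // a ≠ v})) :
    (v, y) ∈ p.flatMap (xEdge N u v) ↔ (⟨u, hu⟩, ⟨y, hy⟩) ∈ p := by
  rw [List.mem_flatMap]
  constructor
  · rintro ⟨e, hep, hm⟩
    unfold xEdge at hm
    split at hm
    · rename_i hcond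
      simp only [List.mem_cons, List.mem_singleton, List.not_mem_nil] at hm
      rcases hm with hm | hm | hm
      · exact absurd (Prod.mk.inj hm).2 hy
      · obtain ⟨_, h2⟩ := Prod.mk.inj hm
        have : e = (⟨u, hu⟩, ⟨y, hy⟩) :=
          Prod.ext (Subtype.ext hcond.1) (Subtype.ext h2.symm)
        rw [← this]; exact hep
      · cases hm
    · simp only [List.mem_singleton] at hm
      exact absurd (Prod.mk.inj hm).1.symm e.1.2
  · intro h
    refine ⟨(⟨u, hu⟩, ⟨y, hy⟩), h, ?_⟩
    unfold xEdge
    rw [if_pos ⟨rfl, hEvy⟩]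
    simp

lemma mem_expand_uv (N : InexactNet V) (u v : V)
    (p : List ({a : V // a ≠ v} × {a : V // a ≠ v})) :
    (u, v) ∈ p.flatMap (xEdge N u v) ↔ ∃ e ∈ p, e.1.1 = u ∧ N.E v e.2.1 := by
  rw [List.mem_flatMap]
  constructor
  · rintro ⟨e, hep, hm⟩
    unfold xEdge at hm
    split at hm
    · exact ⟨e, hep, by assumption⟩
    · simp only [List.mem_singleton] at hm
      exact absurd (Prod.mk.inj hm).2 (fun h => e.2.2 h.symm)
  · rintro ⟨e, hep, hcond⟩
    refine ⟨e, hep, ?_⟩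
    unfold xEdge
    rw [if_pos hcond]
    simp


/-- Y-to-V reduction for inexact flows is correct: if `v` has in-degree 1 with
in-edge `(u,v)` of interval `[L_in, R_in]` satisfying the inexact flow
conservation `L_in ≤ Σ L(v,wᵢ)` and `Σ R(v,wᵢ) ≤ R_in`, then contracting `v`
(giving each new edge `(u,wᵢ)` the interval `[L(v,wᵢ), R(v,wᵢ)]`) puts inexact
flow decompositions of any size `k` in exact correspondence. -/
theorem y_to_v_inexact_correct (N : InexactNet V) (u v : V)
    (hvs : v ≠ N.s) (hvt : v ≠ N.t)
    (huv : N.E u v) (hin : ∀ a : V, N.E a v → a = u)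
    (hnopar : ∀ b : V, N.E v b → ¬ N.E u b)
    (hconsL : N.L u v ≤ ∑ b ∈ Finset.univ.filter (fun b : V => N.E v b), N.L v b)
    (hconsR : (∑ b ∈ Finset.univ.filter (fun b : V => N.E v b), N.R v b) ≤ N.R u v)
    (N' : InexactNet {x : V // x ≠ v})
    (hs : N'.s = ⟨N.s, Ne.symm hvs⟩) (ht : N'.t = ⟨N.t, Ne.symm hvt⟩)
    (hE : ∀ a b : {x : V // x ≠ v},
      N'.E a b = (N.E a.1 b.1 || (decide (a.1 = u) && N.E v b.1)))
    (hL : ∀ a b : {x : V // x ≠ v}, N'.E a b →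
      N'.L a b = if a.1 = u ∧ N.E v b.1 then N.L v b.1 else N.L a.1 b.1)
    (hR : ∀ a b : {x : V // x ≠ v}, N'.E a b →
      N'.R a b = if a.1 = u ∧ N.E v b.1 then N.R v b.1 else N.R a.1 b.1) :
    ∀ k : ℕ, (∃ D, IsIFD N D ∧ D.length = k) ↔ (∃ D', IsIFD N' D' ∧ D'.length = k) := by
  have hu : u ≠ v := by
    intro h
    have := N.topo_lt u v huv
    rw [h] at this
    exact lt_irrefl _ this
  intro k
  constructor
  · rintro ⟨D, ⟨hD1, hD2⟩, hDlen⟩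
    refine ⟨D.map (fun pw => (pw.1.filterMap (cEdge u v hu), pw.2)), ⟨?_, ?_⟩, by simp [hDlen]⟩
    · rintro pw' hpw'
      rw [List.mem_map] at hpw'
      obtain ⟨pw, hpw, rfl⟩ := hpw'
      obtain ⟨⟨⟨hne, he, hc⟩, hhd, hlst⟩, hwpos⟩ := hD1 pw hpw
      obtain ⟨C, Hh, Hl⟩ := contract_struct N u v hu hvt hin pw.1 he hc hlst
        (by
          intro x hx
          rw [hhd] at hx
          simp only [Option.mem_def, Option.some.injEq] at hx
          rw [← hx]
          exact Ne.symm hvs)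
      show IsSTPathI N' (pw.1.filterMap (cEdge u v hu)) ∧ 0 < pw.2
      refine ⟨⟨⟨?_, ?_, C⟩, ?_, ?_⟩, hwpos⟩
      · intro h0
        rw [h0] at Hl
        rw [hlst] at Hl
        simp at Hl
      · rintro ⟨e1, e2⟩ he'
        rw [mem_contract] at he'
        rw [hE]
        rcases he' with h | ⟨h1, h2⟩
        · simp [he _ h]
        · simp [h1, he _ h2]
      · rw [hhd] at Hh
        have hmm : (List.map Prod.fst (pw.1.filterMap (cEdge u v hu))).map Subtype.val
            = List.map (fun e => (e.1.1 : V)) (pw.1.filterMap (cEdge u v hu)) := by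
          rw [List.map_map]
          exact List.map_congr_left (fun a _ => rfl)
        have : (List.map Prod.fst (pw.1.filterMap (cEdge u v hu))).head?.map Subtype.val
            = some N.s := by
          rw [← List.head?_map, hmm, Hh]
        cases h0 : (List.map Prod.fst (pw.1.filterMap (cEdge u v hu))).head? with
        | none => rw [h0] at this; simp at this
        | some x =>
          rw [h0] at this
          simp only [Option.map_some, Option.some.injEq] at this
          rw [hs]
          exact congrArg some (Subtype.ext this)
      · rw [hlst] at Hl
        have hmm : (List.map Prod.snd (pw.1.filterMap (cEdge u v hu))).map Subtype.val
            = List.map (fun e => (e.2.1 : V)) (pw.1.filterMap (cEdge u v hu)) := by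
          rw [List.map_map]
          exact List.map_congr_left (fun a _ => rfl)
        have : (List.map Prod.snd (pw.1.filterMap (cEdge u v hu))).getLast?.map Subtype.val
            = some N.t := by
          rw [← List.getLast?_map, hmm, Hl]
        cases h0 : (List.map Prod.snd (pw.1.filterMap (cEdge u v hu))).getLast? with
        | none => rw [h0] at this; simp at this
        | some x =>
          rw [h0] at this
          simp only [Option.map_some, Option.some.injEq] at this
          rw [ht]
          exact congrArg some (Subtype.ext this)
    · intro a b hab
      rw [List.map_map]
      by_cases hcase : a.1 = u ∧ N.E v b.1
      · have hsum : (D.map ((fun pw => if (a, b) ∈ pw.1 then pw.2 else 0) ∘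
            (fun pw : List (V × V) × ℕ => (pw.1.filterMap (cEdge u v hu), pw.2)))).sum
            = (D.map (fun pw => if (v, b.1) ∈ pw.1 then pw.2 else 0)).sum := by
          congr 1
          refine List.map_congr_left ?_
          intro pw hpw
          obtain ⟨⟨⟨_, he, _⟩, _, _⟩, _⟩ := hD1 pw hpw
          simp only [Function.comp_apply]
          refine if_congr ?_ rfl rfl
          rw [mem_contract]
          constructor
          · rintro (h | ⟨_, h⟩)
            · rw [hcase.1] at h
              exact absurd (he _ h) (hnopar b.1 hcase.2)
            · exact h
          · intro h
            exact Or.inr ⟨hcase.1, h⟩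
        rw [hL a b hab, hR a b hab]
        simp only [if_pos hcase]
        convert hD2 v b.1 hcase.2 using 2 <;> convert hsum
      · have hEab : N.E a.1 b.1 := by
          have h := hE a b
          rw [hab] at h
          have h2 : N.E a.1 b.1 ∨ (a.1 = u ∧ N.E v b.1) := by
            have := h.symm
            simpa using this
          tauto
        have hsum : (D.map ((fun pw => if (a, b) ∈ pw.1 then pw.2 else 0) ∘
            (fun pw : List (V × V) × ℕ => (pw.1.filterMap (cEdge u v hu), pw.2)))).sum
            = (D.map (fun pw => if (a.1, b.1) ∈ pw.1 then pw.2 else 0)).sum := by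
          congr 1
          refine List.map_congr_left ?_
          intro pw hpw
          obtain ⟨⟨⟨_, he, _⟩, _, _⟩, _⟩ := hD1 pw hpw
          simp only [Function.comp_apply]
          refine if_congr ?_ rfl rfl
          rw [mem_contract]
          constructor
          · rintro (h | ⟨h1, h2⟩)
            · exact h
            · exact absurd ⟨h1, he _ h2⟩ hcase
          · exact Or.inl
        rw [hL a b hab, hR a b hab]
        simp only [if_neg hcase]
        convert hD2 a.1 b.1 hEab using 2 <;> convert hsum
  · rintro ⟨D', ⟨hD1, hD2⟩, hDlen⟩
    refine ⟨D'.map (fun pw => (pw.1.flatMap (xEdge N u v), pw.2)), ⟨?_, ?_⟩, by simp [hDlen]⟩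
    · rintro pw' hpw'
      rw [List.mem_map] at hpw'
      obtain ⟨pw, hpw, rfl⟩ := hpw'
      obtain ⟨⟨⟨hne, he, hc⟩, hhd, hlst⟩, hwpos⟩ := hD1 pw hpw
      obtain ⟨C, Hh, Hl⟩ := expand_struct N u v pw.1 hc
      show IsSTPathI N (pw.1.flatMap (xEdge N u v)) ∧ 0 < pw.2
      refine ⟨⟨⟨flatMap_ne_nil N u v pw.1 hne, ?_, C⟩, ?_, ?_⟩, hwpos⟩
      · rintro ⟨x, y⟩ hm
        rw [List.mem_flatMap] at hm
        obtain ⟨e, hep, hm⟩ := hm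
        have hEe : N'.E e.1 e.2 := he e hep
        unfold xEdge at hm
        split at hm
        · rename_i hcond
          simp only [List.mem_cons, List.mem_singleton, List.not_mem_nil] at hm
          rcases hm with hm | hm | hm
          · obtain ⟨h1, h2⟩ := Prod.mk.inj hm
            subst h1; subst h2
            exact huv
          · obtain ⟨h1, h2⟩ := Prod.mk.inj hm
            subst h1; subst h2
            exact hcond.2
          · cases hm
        · rename_i hcond
          simp only [List.mem_singleton] at hm
          obtain ⟨h1, h2⟩ := Prod.mk.inj hm
          subst h1; subst h2
          have h := hE e.1 e.2
          rw [hEe] at h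
          have h2 : N.E e.1.1 e.2.1 ∨ (e.1.1 = u ∧ N.E v e.2.1) := by
            have := h.symm
            simpa using this
          rcases h2 with h2 | h2
          · exact h2
          · exact absurd h2 hcond
      · rw [Hh]
        have hmm : pw.1.map (fun e => (e.1.1 : V)) = (pw.1.map Prod.fst).map Subtype.val := by
          rw [List.map_map]
          exact List.map_congr_left (fun a _ => rfl)
        rw [hmm, List.head?_map, hhd, hs]
        rfl
      · rw [Hl]
        have hmm : pw.1.map (fun e => (e.2.1 : V)) = (pw.1.map Prod.snd).map Subtype.val := by
          rw [List.map_map]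
          exact List.map_congr_left (fun a _ => rfl)
        rw [hmm, List.getLast?_map, hlst, ht]
        rfl
    · intro x y hxy
      rw [List.map_map]
      by_cases hyv : y = v
      · rw [hyv] at hxy ⊢
        have hxu : x = u := hin x hxy
        rw [hxu] at hxy ⊢
        set S := Finset.univ.filter (fun b : V => N.E v b) with hS
        have key : ∀ pw ∈ D',
            ((fun pw => if (u, v) ∈ pw.1 then pw.2 else 0) ∘
              (fun pw : List ({a : V // a ≠ v} × {a : V // a ≠ v}) × ℕ =>
                (pw.1.flatMap (xEdge N u v), pw.2))) pw
            = ∑ c ∈ S, (if hc : c = v then 0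
                else if (⟨u, hu⟩, ⟨c, hc⟩) ∈ pw.1 then pw.2 else 0) := by
          intro pw hpw
          obtain ⟨⟨⟨hne, he, hc⟩, _, _⟩, _⟩ := hD1 pw hpw
          have hdist := path_fst_ne N'.topo pw.1
            (fun e hep => N'.topo_lt _ _ (he e hep)) hc
          simp only [Function.comp_apply]
          by_cases hm : (u, v) ∈ pw.1.flatMap (xEdge N u v)
          · rw [if_pos hm]
            obtain ⟨e, hep, hcond⟩ := (mem_expand_uv N u v pw.1).mp hm
            have he1 : e.1 = ⟨u, hu⟩ := Subtype.ext hcond.1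
            rw [Finset.sum_eq_single_of_mem e.2.1 (by simp [hS, hcond.2])]
            · rw [dif_neg e.2.2, if_pos]
              rw [← he1]
              exact hep
            · intro b hb hbne
              by_cases hbv : b = v
              · rw [dif_pos hbv]
              · rw [dif_neg hbv, if_neg]
                intro hmemb
                have hne' : e ≠ (⟨u, hu⟩, ⟨b, hbv⟩) := by
                  intro heq
                  apply hbne
                  rw [heq]
                exact (hdist e hep _ hmemb hne') (by rw [he1])
          · rw [if_neg hm]
            symm
            apply Finset.sum_eq_zero
            intro b hb
            have hbE : N.E v b := by simpa [hS] using hb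
            by_cases hbv : b = v
            · rw [dif_pos hbv]
            · rw [dif_neg hbv, if_neg]
              intro hmemb
              exact hm ((mem_expand_uv N u v pw.1).mpr
                ⟨(⟨u, hu⟩, ⟨b, hbv⟩), hmemb, rfl, hbE⟩)
        have hmapeq := List.map_congr_left key
        rw [hmapeq, list_sum_finset_sum]
        have hcflow : ∀ c ∈ S,
            N.L v c ≤ (D'.map (fun pw => if hc : c = v then 0
                else if (⟨u, hu⟩, ⟨c, hc⟩) ∈ pw.1 then pw.2 else 0)).sum ∧
            (D'.map (fun pw => if hc : c = v then 0
                else if (⟨u, hu⟩, ⟨c, hc⟩) ∈ pw.1 then pw.2 else 0)).sum ≤ N.R v c := by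
          intro c hcS
          have hcE : N.E v c := by simpa [hS] using hcS
          have hcv : c ≠ v := by
            intro h
            have := N.topo_lt v c hcE
            rw [h] at this
            exact lt_irrefl _ this
          have hE' : N'.E ⟨u, hu⟩ ⟨c, hcv⟩ := by rw [hE]; simp [hcE]
          have hb := hD2 ⟨u, hu⟩ ⟨c, hcv⟩ hE'
          rw [hL _ _ hE', hR _ _ hE'] at hb
          simp only [Subtype.coe_mk, hcE, and_true, true_and, if_true, eq_self_iff_true] at hb
          have hmq : D'.map (fun pw => if hc : c = v then 0
              else if (⟨u, hu⟩, ⟨c, hc⟩) ∈ pw.1 then pw.2 else 0)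
              = D'.map (fun pw => if (⟨u, hu⟩, ⟨c, hcv⟩) ∈ pw.1 then pw.2 else 0) :=
            List.map_congr_left (fun pw _ => by rw [dif_neg hcv])
          rw [hmq]
          convert hb
        constructor
        · exact le_trans hconsL (Finset.sum_le_sum (fun c hc => (hcflow c hc).1))
        · exact le_trans (Finset.sum_le_sum (fun c hc => (hcflow c hc).2)) hconsR
      · have hyv' : y ≠ v := hyv
        by_cases hxv : x = v
        · rw [hxv] at hxy ⊢
          have hE' : N'.E ⟨u, hu⟩ ⟨y, hyv'⟩ := by rw [hE]; simp [hxy]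
          have hsum : (D'.map ((fun pw => if (v, y) ∈ pw.1 then pw.2 else 0) ∘
              (fun pw : List ({a : V // a ≠ v} × {a : V // a ≠ v}) × ℕ =>
                (pw.1.flatMap (xEdge N u v), pw.2)))).sum
              = (D'.map (fun pw => if (⟨u, hu⟩, ⟨y, hyv'⟩) ∈ pw.1 then pw.2 else 0)).sum := by
            congr 1
            refine List.map_congr_left ?_
            intro pw hpw
            simp only [Function.comp_apply]
            exact if_congr (mem_expand_contracted N u v hu y hyv' hxy pw.1) rfl rfl
          rw [hsum]
          have hb := hD2 ⟨u, hu⟩ ⟨y, hyv'⟩ hE'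
          rw [hL _ _ hE', hR _ _ hE'] at hb
          simp only [Subtype.coe_mk, hxy, and_true, true_and, if_true, eq_self_iff_true] at hb
          convert hb
        · have hcond : ¬(x = u ∧ N.E v y) := by
            rintro ⟨rfl, h⟩
            exact hnopar y h hxy
          have hE' : N'.E ⟨x, hxv⟩ ⟨y, hyv'⟩ := by rw [hE]; simp [hxy]
          have hsum : (D'.map ((fun pw => if (x, y) ∈ pw.1 then pw.2 else 0) ∘
              (fun pw : List ({a : V // a ≠ v} × {a : V // a ≠ v}) × ℕ =>
                (pw.1.flatMap (xEdge N u v), pw.2)))).sum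
              = (D'.map (fun pw => if (⟨x, hxv⟩, ⟨y, hyv'⟩) ∈ pw.1 then pw.2 else 0)).sum := by
            congr 1
            refine List.map_congr_left ?_
            intro pw hpw
            simp only [Function.comp_apply]
            exact if_congr (mem_expand_plain N u v x y hxv hyv' hcond pw.1) rfl rfl
          rw [hsum]
          have hb := hD2 ⟨x, hxv⟩ ⟨y, hyv'⟩ hE'
          rw [hL _ _ hE', hR _ _ hE'] at hb
          simp only [if_neg (show ¬(((⟨x, hxv⟩ : {a : V // a ≠ v}) : V) = u ∧ N.E v y)
            from hcond)] at hb
          convert hb
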